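/- Let U ⊆ ℝ² be open with (x,y) ≠ (0,0) for all (x,y) ∈ U, let f : U → ℝ be smooth and λ : U → ℝ smooth and nowhere zero, and suppose f_x − 2y = −2λy and f_y + 2x = 2λx on U (the contactomorphism condition for the graph patch σ(x,y) = (x, y, f(x,y))). Then the horizontal normal of σ is (N₁, N₂) = 2λ·(y, −x), every point of U is noncharacteristic, the unit horizontal normal is (ν₁,ν₂) = ε·(y, −x)/√(x²+y²) with ε = sgn(λ), and the horizontal mean curvature of σ vanishes: ∂ν₁/∂x + ∂ν₂/∂y = 0 on U. (A graph over ℂ that is contactomorphic to the complex plane is H-minimal.) -/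

import Mathlib

/-- Partial derivative in the first variable. -/
noncomputable def pu (f : ℝ × ℝ → ℝ) (p : ℝ × ℝ) : ℝ := deriv (fun u => f (u, p.2)) p.1

/-- Partial derivative in the second variable. -/
noncomputable def pv (f : ℝ × ℝ → ℝ) (p : ℝ × ℝ) : ℝ := deriv (fun v => f (p.1, v)) p.2

/-- For the graph patch σ(x,y) = (x, y, f(x,y)): N₁ = −f_x + 2y. -/
noncomputable def N1g (f : ℝ × ℝ → ℝ) (p : ℝ × ℝ) : ℝ := -pu f p + 2 * p.2

/-- For the graph patch σ(x,y) = (x, y, f(x,y)): N₂ = −f_y − 2x. -/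
noncomputable def N2g (f : ℝ × ℝ → ℝ) (p : ℝ × ℝ) : ℝ := -pv f p - 2 * p.1

/-- Unit horizontal normal, first component, of the graph patch. -/
noncomputable def nu1g (f : ℝ × ℝ → ℝ) (p : ℝ × ℝ) : ℝ :=
  N1g f p / Real.sqrt (N1g f p ^ 2 + N2g f p ^ 2)

/-- Unit horizontal normal, second component, of the graph patch. -/
noncomputable def nu2g (f : ℝ × ℝ → ℝ) (p : ℝ × ℝ) : ℝ :=
  N2g f p / Real.sqrt (N1g f p ^ 2 + N2g f p ^ 2)


lemma sq_add_pos {a b : ℝ} (h : (a, b) ≠ ((0:ℝ), (0:ℝ))) : 0 < a ^ 2 + b ^ 2 := by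
  rcases eq_or_ne a 0 with ha | ha
  · rcases eq_or_ne b 0 with hb | hb
    · exact absurd (by simp [ha, hb]) h
    · positivity
  · positivity

lemma key_formula (ε a c : ℝ) (h : a ^ 2 + c ^ 2 ≠ 0) :
    HasDerivAt (fun u => ε * (c / Real.sqrt (u ^ 2 + c ^ 2)))
      (ε * (-(c * a) / Real.sqrt (a ^ 2 + c ^ 2) ^ 3)) a := by
  have h1 : HasDerivAt (fun u : ℝ => u ^ 2 + c ^ 2) (2 * a) a := by
    simpa using ((hasDerivAt_pow 2 a).add_const (c ^ 2))
  have hs := h1.sqrt h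
  have hsq : Real.sqrt (a ^ 2 + c ^ 2) ≠ 0 := by
    positivity
  have hd := (hasDerivAt_const a c).div hs hsq
  have := hd.const_mul ε
  refine this.congr_deriv (Eq.symm ?_)
  have hsqs : Real.sqrt (a ^ 2 + c ^ 2) ^ 2 = a ^ 2 + c ^ 2 := Real.sq_sqrt (by positivity)
  field_simp
  ring_nf

lemma nu_formula (f lam : ℝ × ℝ → ℝ) (q : ℝ × ℝ) (hq0 : q ≠ (0, 0)) (hl : lam q ≠ 0)
    (h1 : pu f q - 2 * q.2 = -2 * lam q * q.2) (h2 : pv f q + 2 * q.1 = 2 * lam q * q.1) :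
    N1g f q = 2 * lam q * q.2 ∧ N2g f q = -(2 * lam q * q.1) ∧
    nu1g f q = Real.sign (lam q) * (q.2 / Real.sqrt (q.1 ^ 2 + q.2 ^ 2)) ∧
    nu2g f q = -(Real.sign (lam q) * (q.1 / Real.sqrt (q.1 ^ 2 + q.2 ^ 2))) := by
  have hN1 : N1g f q = 2 * lam q * q.2 := by unfold N1g; linarith
  have hN2 : N2g f q = -(2 * lam q * q.1) := by unfold N2g; linarith
  have hq : (q.1, q.2) ≠ ((0:ℝ), (0:ℝ)) := by
    rw [show (q.1, q.2) = q from rfl]; exact hq0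
  have hpos : 0 < q.1 ^ 2 + q.2 ^ 2 := sq_add_pos hq
  have hr : 0 < Real.sqrt (q.1 ^ 2 + q.2 ^ 2) := Real.sqrt_pos.2 hpos
  have hsum : N1g f q ^ 2 + N2g f q ^ 2 = (2 * lam q) ^ 2 * (q.1 ^ 2 + q.2 ^ 2) := by
    rw [hN1, hN2]; ring
  have hsqrt : Real.sqrt (N1g f q ^ 2 + N2g f q ^ 2)
      = |2 * lam q| * Real.sqrt (q.1 ^ 2 + q.2 ^ 2) := by
    rw [hsum, Real.sqrt_mul (sq_nonneg _), Real.sqrt_sq_eq_abs]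
  refine ⟨hN1, hN2, ?_, ?_⟩
  · unfold nu1g
    rw [hsqrt, hN1]
    rcases hl.lt_or_gt with h | h
    · rw [Real.sign_of_neg h, abs_of_neg (by linarith : 2 * lam q < 0)]
      field_simp
    · rw [Real.sign_of_pos h, abs_of_pos (by linarith : 0 < 2 * lam q)]
      field_simp
  · unfold nu2g
    rw [hsqrt, hN2]
    rcases hl.lt_or_gt with h | h
    · rw [Real.sign_of_neg h, abs_of_neg (by linarith : 2 * lam q < 0)]
      field_simp
    · rw [Real.sign_of_pos h, abs_of_pos (by linarith : 0 < 2 * lam q)]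
      field_simp

/-- if the graph patch σ(x,y) = (x,y,f(x,y)) over U (with (0,0) ∉ U)
satisfies the contactomorphism condition f_x − 2y = −2λy, f_y + 2x = 2λx with λ nowhere
zero, then (N₁,N₂) = 2λ(y,−x), every point is noncharacteristic, (ν₁,ν₂) =
sgn(λ)·(y,−x)/√(x²+y²), and the horizontal mean curvature ∂ν₁/∂x + ∂ν₂/∂y vanishes on U. -/
theorem stmt_12 (U : Set (ℝ × ℝ)) (hU : IsOpen U)
    (h0 : ∀ p ∈ U, p ≠ (0, 0))
    (f lam : ℝ × ℝ → ℝ)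
    (hf : ContDiffOn ℝ (⊤ : ℕ∞) f U) (hlam : ContDiffOn ℝ (⊤ : ℕ∞) lam U)
    (hlam0 : ∀ p ∈ U, lam p ≠ 0)
    (hc1 : ∀ p ∈ U, pu f p - 2 * p.2 = -2 * lam p * p.2)
    (hc2 : ∀ p ∈ U, pv f p + 2 * p.1 = 2 * lam p * p.1) :
    ∀ p ∈ U,
      N1g f p = 2 * lam p * p.2 ∧
      N2g f p = -(2 * lam p * p.1) ∧
      ¬(N1g f p = 0 ∧ N2g f p = 0) ∧
      nu1g f p = Real.sign (lam p) * (p.2 / Real.sqrt (p.1 ^ 2 + p.2 ^ 2)) ∧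
      nu2g f p = -(Real.sign (lam p) * (p.1 / Real.sqrt (p.1 ^ 2 + p.2 ^ 2))) ∧
      pu (nu1g f) p + pv (nu2g f) p = 0 := by
    intro p hp
    have hq0 := h0 p hp
    have hl := hlam0 p hp
    obtain ⟨hN1, hN2, hnu1, hnu2⟩ :=
      nu_formula f lam p hq0 hl (hc1 p hp) (hc2 p hp)
    have hq : (p.1, p.2) ≠ ((0:ℝ), (0:ℝ)) := by
      rw [show (p.1, p.2) = p from rfl]; exact hq0
    have hpos : 0 < p.1 ^ 2 + p.2 ^ 2 := sq_add_pos hq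
    have hr : 0 < Real.sqrt (p.1 ^ 2 + p.2 ^ 2) := Real.sqrt_pos.2 hpos
    have hnc : ¬(N1g f p = 0 ∧ N2g f p = 0) := by
      rintro ⟨e1, e2⟩
      rw [hN1] at e1; rw [hN2] at e2
      have hy : p.2 = 0 := by
        rcases mul_eq_zero.1 e1 with h | h
        · rcases mul_eq_zero.1 h with h' | h'
          · norm_num at h'
          · exact absurd h' hl
        · exact h
      have hx : p.1 = 0 := by
        have e2' : 2 * lam p * p.1 = 0 := by linarith
        rcases mul_eq_zero.1 e2' with h | h
        · rcases mul_eq_zero.1 h with h' | h'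
          · norm_num at h'
          · exact absurd h' hl
        · exact h
      exact hq (by rw [hx, hy])
    refine ⟨hN1, hN2, hnc, hnu1, hnu2, ?_⟩
    -- construct a sign-constant open neighborhood
    obtain ⟨V, hVopen, hpV, hVsub, hVsign⟩ :
        ∃ V : Set (ℝ × ℝ), IsOpen V ∧ p ∈ V ∧ V ⊆ U ∧
          ∀ q ∈ V, Real.sign (lam q) = Real.sign (lam p) := by
      rcases hl.lt_or_gt with h | h
      · refine ⟨U ∩ lam ⁻¹' Set.Iio 0,
          hlam.continuousOn.isOpen_inter_preimage hU isOpen_Iio,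
          ⟨hp, h⟩, Set.inter_subset_left, ?_⟩
        intro q hq'
        rw [Real.sign_of_neg hq'.2, Real.sign_of_neg h]
      · refine ⟨U ∩ lam ⁻¹' Set.Ioi 0,
          hlam.continuousOn.isOpen_inter_preimage hU isOpen_Ioi,
          ⟨hp, h⟩, Set.inter_subset_left, ?_⟩
        intro q hq'
        rw [Real.sign_of_pos hq'.2, Real.sign_of_pos h]
    set eps := Real.sign (lam p) with heps
    -- values of nu on V
    have hval : ∀ q ∈ V,
        nu1g f q = eps * (q.2 / Real.sqrt (q.1 ^ 2 + q.2 ^ 2)) ∧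
        nu2g f q = -(eps * (q.1 / Real.sqrt (q.1 ^ 2 + q.2 ^ 2))) := by
      intro q hq'
      have hqU := hVsub hq'
      obtain ⟨_, _, a, b⟩ :=
        nu_formula f lam q (h0 q hqU) (hlam0 q hqU) (hc1 q hqU) (hc2 q hqU)
      rw [hVsign q hq'] at a b
      exact ⟨a, b⟩
    -- first partial of nu1
    have hev1 : (fun u => nu1g f (u, p.2)) =ᶠ[nhds p.1]
        (fun u => eps * (p.2 / Real.sqrt (u ^ 2 + p.2 ^ 2))) := by
      have hcont : Continuous (fun u : ℝ => (u, p.2)) := by continuity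
      have : ∀ᶠ u in nhds p.1, (u, p.2) ∈ V :=
        hcont.continuousAt.preimage_mem_nhds (hVopen.mem_nhds (by simpa using hpV))
      filter_upwards [this] with u hu
      exact (hval (u, p.2) hu).1
    have hev2 : (fun v => nu2g f (p.1, v)) =ᶠ[nhds p.2]
        (fun v => -(eps * (p.1 / Real.sqrt (v ^ 2 + p.1 ^ 2)))) := by
      have hcont : Continuous (fun v : ℝ => (p.1, v)) := by continuity
      have : ∀ᶠ v in nhds p.2, (p.1, v) ∈ V :=
        hcont.continuousAt.preimage_mem_nhds (hVopen.mem_nhds (by simpa using hpV))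
      filter_upwards [this] with v hv
      rw [(hval (p.1, v) hv).2]
      norm_num [add_comm ((p.1:ℝ) ^ 2) (v ^ 2)]
    have hd1 := key_formula eps p.1 p.2 (ne_of_gt hpos)
    have hd2 := (key_formula eps p.2 p.1
      (by rw [add_comm]; exact ne_of_gt hpos)).neg
    have e1 : pu (nu1g f) p
        = eps * (-(p.2 * p.1) / Real.sqrt (p.1 ^ 2 + p.2 ^ 2) ^ 3) := by
      unfold pu
      rw [hev1.deriv_eq]
      exact hd1.deriv
    have e2 : pv (nu2g f) p
        = -(eps * (-(p.1 * p.2) / Real.sqrt (p.2 ^ 2 + p.1 ^ 2) ^ 3)) := by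
      unfold pv
      rw [hev2.deriv_eq]
      exact hd2.deriv
    rw [e1, e2, add_comm ((p.2:ℝ) ^ 2) (p.1 ^ 2)]
    ring
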